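/- arXiv:1307.5900 — 2 statements merged into one kernel-verified Lean document; each statement's English description precedes it below -/
import Mathlib

section
/- For all positive integers n, d, k: H_s(kn, kd) ≥ H_s(n,d)^k / 2^{k−1}, where H_s(n,d) is the maximum adjacency-graph diameter of strongly connected pure (d−1)-complexes on n vertices. -/
/-!
A complex attaining `Hs n d` has two facets at distance `Hs n d`; the facets along a geodesic
between them form a corridor, i.e. an induced path of length `Hs n d` in the Johnson graph of
`d`-subsets of an `n`-set. Joining complexes on disjoint vertex sets embeds the Cartesian product
of their adjacency graphs into the Johnson graph of the disjoint union, and a grid `P × P'` of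
paths of lengths `l₁, l₂` contains an induced snake path of length at least `l₁ l₂ / 2`. Joining
the corridor with itself `k - 1` times therefore yields a corridor of length at least
`Hs n d ^ k / 2 ^ (k - 1)` on `k n` vertices with facets of size `k d`.
-/

open Finset

/-- The adjacency (dual) graph of a pure simplicial complex, given by its set of
facets: two facets are adjacent iff they differ in exactly one element. -/
def adjGraph {V : Type*} [DecidableEq V] (C : Finset (Finset V)) :
    SimpleGraph {X // X ∈ C} where
  Adj X Y := (X.1 \ Y.1).card = 1 ∧ (Y.1 \ X.1).card = 1
  symm := ⟨fun X Y h => ⟨h.2, h.1⟩⟩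
  loopless := ⟨fun X h => by simp at h⟩

/-- `Hs n d` : maximum diameter of the adjacency graph among all strongly
connected pure `(d-1)`-dimensional simplicial complexes on `n` vertices. -/
noncomputable def Hs (n d : ℕ) : ℕ :=
  sSup {δ | ∃ C : Finset (Finset (Fin n)),
    (∀ X ∈ C, X.card = d) ∧ (adjGraph C).Connected ∧ (adjGraph C).diam = δ}

namespace SimpleGraph

def Embedding.boxProd {α β γ δ : Type*} {G : SimpleGraph α} {G' : SimpleGraph β}
    {H : SimpleGraph γ} {H' : SimpleGraph δ} (f : G ↪g G') (g : H ↪g H') :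
    G.boxProd H ↪g G'.boxProd H' where
  toEmbedding := f.toEmbedding.prodMap g.toEmbedding
  map_rel_iff' := by simp [boxProd_adj, f.injective.eq_iff, g.injective.eq_iff]

lemma Walk.val_le_val_add_length {n : ℕ} {u v : Fin n} (w : (pathGraph n).Walk u v) :
    v.val ≤ u.val + w.length := by
  induction w with
  | nil => simp
  | cons h _ ih => rw [pathGraph_adj] at h; simp only [Walk.length_cons]; omega

variable {α : Type*} {G : SimpleGraph α} {u v : α}

lemma Reachable.val_le_val_add_dist {n : ℕ} (f : G →g pathGraph n) (h : G.Reachable u v) :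
    (f v).val ≤ (f u).val + G.dist u v := by
  obtain ⟨w, hw⟩ := h.exists_walk_length_eq_dist
  exact hw ▸ w.length_map f ▸ (w.map f).val_le_val_add_length

/- Splicing `q` into `p` gives a walk from `u` to `v`, which is no shorter than `p`. -/
lemma Walk.sub_le_length_of_length_eq_dist (p : G.Walk u v) (hp : p.length = G.dist u v)
    {i j : ℕ} (hij : i ≤ j) (hj : j ≤ p.length) (q : G.Walk (p.getVert i) (p.getVert j)) :
    j - i ≤ q.length := by
  have := dist_le ((p.take i).append (q.append (p.drop j)))
  simp only [Walk.length_append, Walk.take_length, Walk.drop_length] at this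
  omega

theorem Walk.exists_pathGraph_embedding_of_length_eq_dist (p : G.Walk u v)
    (hp : p.length = G.dist u v) : Nonempty (pathGraph (p.length + 1) ↪g G) := by
  have shortcut {i j : Fin (p.length + 1)} (hij : i ≤ j)
      (q : G.Walk (p.getVert i) (p.getVert j)) : j - i ≤ q.length :=
    p.sub_le_length_of_length_eq_dist hp hij (Nat.le_of_lt_succ j.2) q
  refine ⟨⟨⟨fun i => p.getVert i, fun i j h => ?_⟩, fun {i j} => ?_⟩⟩
  · wlog hij : i ≤ j generalizing i j
    · exact (this j i h.symm (le_of_not_ge hij)).symm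
    have := shortcut hij (Walk.nil.copy rfl h)
    simp only [Walk.length_copy, Walk.length_nil] at this
    exact Fin.ext (by omega)
  · wlog hij : i ≤ j generalizing i j
    · rw [adj_comm, (pathGraph _).adj_comm]
      exact this (le_of_not_ge hij)
    change G.Adj (p.getVert i) (p.getVert j) ↔ _
    rw [pathGraph_adj]
    constructor
    · intro h
      have hne : i ≠ j := by rintro rfl; exact h.ne rfl
      have := shortcut hij h.toWalk
      simp only [Adj.toWalk, Walk.length_cons, Walk.length_nil] at this
      omega
    · rintro (h | h)
      · exact h ▸ p.adj_getVert_succ (by omega)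
      · omega

theorem Connected.exists_pathGraph_embedding_diam (hG : G.Connected) :
    Nonempty (pathGraph (G.diam + 1) ↪g G) := by
  have := hG.nonempty
  obtain ⟨u, v, huv⟩ := G.exists_dist_eq_diam
  obtain ⟨p, hp⟩ := (hG u v).exists_walk_length_eq_dist
  rw [← huv, ← hp]
  exact p.exists_pathGraph_embedding_of_length_eq_dist hp

end SimpleGraph

open SimpleGraph

lemma Nat.add_one_eq_iff_div_mod {q t t' : ℕ} (hq : 0 < q) :
    t + 1 = t' ↔ t' / q = t / q ∧ t' % q = t % q + 1 ∨
      t' / q = t / q + 1 ∧ t % q + 1 = q ∧ t' % q = 0 := by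
  have ht := Nat.div_add_mod t q
  have ht' := Nat.div_add_mod t' q
  have := Nat.mod_lt t hq
  constructor
  · rintro rfl
    by_cases h : t % q + 1 < q
    · exact .inl ((Nat.div_mod_unique hq).2 ⟨by omega, h⟩)
    · have := (Nat.div_mod_unique hq).2 (⟨by rw [mul_add_one]; omega, hq⟩ :
        0 + q * (t / q + 1) = t + 1 ∧ 0 < q)
      exact .inr ⟨this.1, by omega, this.2⟩
  · rintro (⟨h1, h2⟩ | ⟨h1, h2, h3⟩) <;> rw [h1] at ht'
    · omega
    · rw [mul_add_one] at ht'; omega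

/- The snake through the grid `[0, l] × ℕ`, indexed by block `b` and offset `o < l + 2`: for
`o ≤ l` it runs along row `2 b`, left to right if `b` is even and right to left if `b` is odd,
and `o = l + 1` is the single vertex of row `2 b + 1`, above the end of row `2 b`. Visiting odd
rows only at one end is what makes the path induced. With `r` blocks followed by row `2 r` it
has length `(l + 2) r + l`. -/
def snakeCol (l b o : ℕ) : ℕ :=
  if o ≤ l then (if b % 2 = 0 then o else l - o) else (if b % 2 = 0 then l else 0)

def snakeRow (l b o : ℕ) : ℕ := if o ≤ l then 2 * b else 2 * b + 1

lemma snakeCol_le (l b o : ℕ) : snakeCol l b o ≤ l := by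
  unfold snakeCol; split_ifs <;> omega

lemma snakeRow_div_mod_le {l r t : ℕ} (ht : t ≤ (l + 2) * r + l) :
    snakeRow l (t / (l + 2)) (t % (l + 2)) ≤ 2 * r := by
  have hdiv := Nat.div_add_mod t (l + 2)
  have hlt : t / (l + 2) < r + 1 := (Nat.div_lt_iff_lt_mul (by omega)).2 (by linarith)
  unfold snakeRow
  rcases Nat.lt_succ_iff_lt_or_eq.1 hlt with h | h
  · split_ifs <;> omega
  · rw [h] at hdiv ⊢
    split_ifs <;> omega

lemma snake_inj {l b o b' o' : ℕ} (ho : o < l + 2) (ho' : o' < l + 2)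
    (hc : snakeCol l b o = snakeCol l b' o') (hr : snakeRow l b o = snakeRow l b' o') :
    b = b' ∧ o = o' := by
  unfold snakeCol snakeRow at *
  grind

lemma snake_adj_iff {l b o b' o' : ℕ} (ho : o < l + 2) (ho' : o' < l + 2) :
    ((snakeCol l b o + 1 = snakeCol l b' o' ∨ snakeCol l b' o' + 1 = snakeCol l b o) ∧
        snakeRow l b o = snakeRow l b' o' ∨
      (snakeRow l b o + 1 = snakeRow l b' o' ∨ snakeRow l b' o' + 1 = snakeRow l b o) ∧
        snakeCol l b o = snakeCol l b' o') ↔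
    (b' = b ∧ o' = o + 1 ∨ b' = b + 1 ∧ o + 1 = l + 2 ∧ o' = 0) ∨
      (b = b' ∧ o = o' + 1 ∨ b = b' + 1 ∧ o' + 1 = l + 2 ∧ o = 0) := by
  unfold snakeCol snakeRow
  grind

theorem exists_pathGraph_embedding_boxProd (l₁ l₂ : ℕ) : ∃ l, l₁ * l₂ ≤ 2 * l ∧
    Nonempty (pathGraph (l + 1) ↪g pathGraph (l₁ + 1) □ pathGraph (l₂ + 1)) := by
  have hq : 0 < l₁ + 2 := by omega
  have hl₂ : l₁ * l₂ ≤ l₁ * (2 * (l₂ / 2) + 1) := Nat.mul_le_mul_left l₁ (by omega)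
  refine ⟨(l₁ + 2) * (l₂ / 2) + l₁, by generalize l₂ / 2 = r at hl₂ ⊢; linarith, ?_⟩
  set l := (l₁ + 2) * (l₂ / 2) + l₁
  let f (t : Fin (l + 1)) : Fin (l₁ + 1) × Fin (l₂ + 1) :=
    (⟨snakeCol l₁ (t / (l₁ + 2)) (t % (l₁ + 2)), Nat.lt_succ_of_le (snakeCol_le ..)⟩,
      ⟨snakeRow l₁ (t / (l₁ + 2)) (t % (l₁ + 2)),
        by have := snakeRow_div_mod_le (Nat.le_of_lt_succ t.2); omega⟩)
  have hf : f.Injective := by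
    intro t t' h
    simp only [f, Prod.mk.injEq, Fin.mk.injEq] at h
    obtain ⟨hb, ho⟩ := snake_inj (Nat.mod_lt t hq) (Nat.mod_lt t' hq) h.1 h.2
    exact Fin.ext (by rw [← Nat.div_add_mod t (l₁ + 2), hb, ho, Nat.div_add_mod])
  refine ⟨⟨⟨f, hf⟩, fun {t t'} => ?_⟩⟩
  change (pathGraph _ □ pathGraph _).Adj (f t) (f t') ↔ _
  simp only [f, boxProd_adj, pathGraph_adj, Fin.ext_iff]
  rw [snake_adj_iff (Nat.mod_lt t hq) (Nat.mod_lt t' hq), ← Nat.add_one_eq_iff_div_mod hq,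
    ← Nat.add_one_eq_iff_div_mod hq]

lemma Finset.disjSum_sdiff_disjSum {V W : Type*} [DecidableEq V] [DecidableEq W]
    (s s' : Finset V) (t t' : Finset W) :
    s.disjSum t \ s'.disjSum t' = (s \ s').disjSum (t \ t') := by
  ext (x | x) <;> simp

/- `adjGraph C` is the subgraph of `johnsonGraph V d` induced on a `d`-uniform complex `C`; a
corridor of length `l` is encoded as an embedding `pathGraph (l + 1) ↪g johnsonGraph V d`. -/
def johnsonGraph (V : Type*) [DecidableEq V] (d : ℕ) :
    SimpleGraph {X : Finset V // X.card = d} where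
  Adj X Y := (X.1 \ Y.1).card = 1 ∧ (Y.1 \ X.1).card = 1
  symm := ⟨fun X Y h => ⟨h.2, h.1⟩⟩
  loopless := ⟨fun X h => by simp at h⟩

namespace johnsonGraph

variable {V W : Type*} [DecidableEq V] [DecidableEq W] {d : ℕ}

lemma card_sdiff_eq_zero_iff {X Y : {X : Finset V // X.card = d}} :
    (X.1 \ Y.1).card = 0 ↔ X = Y := by
  rw [card_eq_zero, sdiff_eq_empty_iff_subset, Subtype.ext_iff]
  exact ⟨fun h => eq_of_subset_of_card_le h (X.2.trans Y.2.symm).ge, fun h => h.subset⟩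

def map (e : V ↪ W) : johnsonGraph V d ↪g johnsonGraph W d where
  toFun X := ⟨X.1.map e, by rw [card_map, X.2]⟩
  inj' := .of_comp (f := Subtype.val) ((Finset.map_injective e).comp Subtype.val_injective)
  map_rel_iff' := by simp [johnsonGraph, ← Finset.map_sdiff]

def boxProdEmbedding (d₁ d₂ : ℕ) :
    (johnsonGraph V d₁).boxProd (johnsonGraph W d₂) ↪g johnsonGraph (V ⊕ W) (d₁ + d₂) where
  toFun p := ⟨p.1.1.disjSum p.2.1, by rw [card_disjSum, p.1.2, p.2.2]⟩
  inj' := .of_comp (f := Subtype.val) (Injective2_disjSum.uncurry.comp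
    (Subtype.val_injective.prodMap Subtype.val_injective))
  map_rel_iff' {p p'} := by
    obtain ⟨X, Y⟩ := p
    obtain ⟨X', Y'⟩ := p'
    have hX := card_sdiff_comm (X.2.trans X'.2.symm)
    have hY := card_sdiff_comm (Y.2.trans Y'.2.symm)
    have hX0 := card_sdiff_eq_zero_iff (X := X) (Y := X')
    have hY0 := card_sdiff_eq_zero_iff (X := Y) (Y := Y')
    simp only [Function.Embedding.coeFn_mk, johnsonGraph, boxProd_adj, disjSum_sdiff_disjSum,
      card_disjSum, ← hX0, ← hY0]
    omega

end johnsonGraph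

lemma Hs_bddAbove (n d : ℕ) : BddAbove {δ | ∃ C : Finset (Finset (Fin n)),
    (∀ X ∈ C, X.card = d) ∧ (adjGraph C).Connected ∧ (adjGraph C).diam = δ} :=
  ((Set.finite_range fun C : Finset (Finset (Fin n)) => (adjGraph C).diam).subset
    (by rintro _ ⟨C, -, -, rfl⟩; exact ⟨C, rfl⟩)).bddAbove

theorem le_Hs_of_pathGraph_embedding {n d l : ℕ}
    (F : pathGraph (l + 1) ↪g johnsonGraph (Fin n) d) : l ≤ Hs n d := by
  set C := univ.image fun i => (F i).1
  let f (i : Fin (l + 1)) : {X // X ∈ C} := ⟨(F i).1, mem_image_of_mem _ (mem_univ i)⟩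
  have hf : f.Bijective :=
    ⟨fun i j h => F.injective (Subtype.ext (Subtype.mk.inj h)),
      by rintro ⟨X, hX⟩; obtain ⟨i, -, rfl⟩ := mem_image.1 hX; exact ⟨i, rfl⟩⟩
  let e : pathGraph (l + 1) ≃g adjGraph C := ⟨Equiv.ofBijective f hf, F.map_rel_iff⟩
  have hconn : (adjGraph C).Connected := e.connected_iff.1 (pathGraph_connected l)
  have := hconn.nonempty
  have hl : l ≤ (adjGraph C).dist (e 0) (e (Fin.last l)) := by
    simpa using (hconn (e 0) (e (Fin.last l))).val_le_val_add_dist e.symm.toHom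
  have hC : ∀ X ∈ C, X.card = d := by
    intro X hX
    obtain ⟨i, -, rfl⟩ := mem_image.1 hX
    exact (F i).2
  calc l ≤ (adjGraph C).dist (e 0) (e (Fin.last l)) := hl
    _ ≤ (adjGraph C).diam := dist_le_diam (connected_iff_ediam_ne_top.1 hconn)
    _ ≤ Hs n d := le_csSup (Hs_bddAbove n d) ⟨C, hC, hconn, rfl⟩

theorem exists_pathGraph_embedding_Hs {n d : ℕ} (h : 0 < Hs n d) :
    Nonempty (pathGraph (Hs n d + 1) ↪g johnsonGraph (Fin n) d) := by
  have hne : {δ | ∃ C : Finset (Finset (Fin n)),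
      (∀ X ∈ C, X.card = d) ∧ (adjGraph C).Connected ∧ (adjGraph C).diam = δ}.Nonempty := by
    by_contra hS
    simp [Hs, Set.not_nonempty_iff_eq_empty.1 hS] at h
  obtain ⟨C, hC, hconn, hdiam⟩ := Nat.sSup_mem hne (Hs_bddAbove n d)
  obtain ⟨F⟩ := hconn.exists_pathGraph_embedding_diam
  let ι : adjGraph C ↪g johnsonGraph (Fin n) d :=
    ⟨⟨fun X => ⟨X.1, hC X.1 X.2⟩, fun X Y h => Subtype.ext (Subtype.mk.inj h)⟩, Iff.rfl⟩
  have hdiam : (adjGraph C).diam = Hs n d := hdiam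
  exact hdiam ▸ ⟨ι.comp F⟩

theorem exists_pathGraph_embedding_join {V W : Type*} [DecidableEq V] [DecidableEq W]
    {d₁ d₂ l₁ l₂ : ℕ} (F₁ : pathGraph (l₁ + 1) ↪g johnsonGraph V d₁)
    (F₂ : pathGraph (l₂ + 1) ↪g johnsonGraph W d₂) :
    ∃ l, l₁ * l₂ ≤ 2 * l ∧ Nonempty (pathGraph (l + 1) ↪g johnsonGraph (V ⊕ W) (d₁ + d₂)) := by
  obtain ⟨l, hl, ⟨S⟩⟩ := exists_pathGraph_embedding_boxProd l₁ l₂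
  exact ⟨l, hl, ⟨(johnsonGraph.boxProdEmbedding d₁ d₂).comp ((F₁.boxProd F₂).comp S)⟩⟩

theorem exists_pathGraph_embedding_pow {n d l : ℕ}
    (F : pathGraph (l + 1) ↪g johnsonGraph (Fin n) d) (k : ℕ) :
    ∃ m, l ^ (k + 1) ≤ 2 ^ k * m ∧
      Nonempty (pathGraph (m + 1) ↪g johnsonGraph (Fin ((k + 1) * n)) ((k + 1) * d)) := by
  induction k with
  | zero => exact ⟨l, by simp, by rw [zero_add, one_mul, one_mul]; exact ⟨F⟩⟩
  | succ k ih =>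
    obtain ⟨m, hm, ⟨G⟩⟩ := ih
    obtain ⟨m', hm', ⟨J⟩⟩ := exists_pathGraph_embedding_join G F
    refine ⟨m', ?_, ⟨?_⟩⟩
    · calc l ^ (k + 2) = l ^ (k + 1) * l := pow_succ l (k + 1)
        _ ≤ 2 ^ k * m * l := Nat.mul_le_mul_right l hm
        _ = 2 ^ k * (m * l) := mul_assoc ..
        _ ≤ 2 ^ k * (2 * m') := Nat.mul_le_mul_left _ hm'
        _ = 2 ^ (k + 1) * m' := by ring
    · rw [add_one_mul (k + 1) d]
      let e := finSumFinEquiv.trans (finCongr (add_one_mul (k + 1) n).symm)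
      exact (johnsonGraph.map e.toEmbedding).comp J

theorem Hs_join_power_bound_general (n d k : ℕ) (hk : 1 ≤ k) :
    Hs n d ^ k ≤ 2 ^ (k - 1) * Hs (k * n) (k * d) := by
  obtain ⟨k, rfl⟩ := Nat.exists_eq_add_of_le' hk
  rcases (Hs n d).eq_zero_or_pos with h | h
  · simp [h]
  obtain ⟨F⟩ := exists_pathGraph_embedding_Hs h
  obtain ⟨m, hm, ⟨G⟩⟩ := exists_pathGraph_embedding_pow F k
  simpa using hm.trans (Nat.mul_le_mul_left _ (le_Hs_of_pathGraph_embedding G))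

/-- For all positive integers `n`, `d`, `k`:
`H_s(kn, kd) ≥ H_s(n,d)^k / 2^{k−1}`. -/
theorem Hs_join_power_bound (n d k : ℕ) (hn : 1 ≤ n) (hd : 1 ≤ d) (hk : 1 ≤ k) :
    Hs n d ^ k ≤ 2 ^ (k - 1) * Hs (k * n) (k * d) :=
  Hs_join_power_bound_general n d k hk
end

section
/- For every connected layer multicomplex M of rank d on n elements there exist positive integers n_1,...,n_k with n_1 + ... + n_k ≤ 2n − 1 such that the length of M is at most H_clm(n_1, d−1) + ... + H_clm(n_k, d−1) + k − 1. -/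
/-!
Let `v` be a vertex of the first layer and cut the layer sequence after the last layer `b₁`
containing `v`. By the interval property `v` lies in every layer of `[a, b₁]`, so the links of
`v` in these layers form a connected layer multicomplex of rank `d - 1` and length `b₁ - a`
on the vertices of the piece. The vertices of the first layer occur in no later piece, and two
consecutive pieces only share vertices of the first layer of the second one; hence by induction
the piece sizes plus the size of the first layer are at most twice the number of vertices.
-/

/-- `IsCLM n d a b L` : the layers `L a, …, L b` form a connected layer multicomplex
of rank `d` on `n` elements. The facets (size-`d` multisets of `[n]`) are partitioned
into the nonempty layers `L a, …, L b`, and for every multiset `S` the set of layers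
whose star contains `S` is an interval. -/
def IsCLM (n d : ℕ) (a b : ℤ) (L : ℤ → Set (Multiset (Fin n))) : Prop :=
  a ≤ b ∧
  (∀ i X, X ∈ L i → Multiset.card X = d) ∧
  (∀ i, (L i).Nonempty ↔ a ≤ i ∧ i ≤ b) ∧
  (∀ i j X, X ∈ L i → X ∈ L j → i = j) ∧
  (∀ (S : Multiset (Fin n)) (i j k : ℤ), i ≤ j → j ≤ k →
    (∃ X ∈ L i, S ≤ X) → (∃ X ∈ L k, S ≤ X) → ∃ X ∈ L j, S ≤ X)

/-- `Hclm n d` : the maximum length of connected layer multicomplexes of rank `d`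
on `n` elements. -/
noncomputable def Hclm (n d : ℕ) : ℕ :=
  sSup {l | ∃ (a b : ℤ) (L : ℤ → Set (Multiset (Fin n))),
    IsCLM n d a b L ∧ (b - a).toNat = l}

theorem Multiset.exists_map_eq_of_forall_mem_range {α β : Type*} {f : α → β}
    {s : Multiset β} (hs : ∀ x ∈ s, x ∈ Set.range f) : ∃ t : Multiset α, t.map f = s := by
  induction s using Multiset.induction_on with
  | empty => exact ⟨0, rfl⟩
  | cons x s ih =>
    obtain ⟨y, rfl⟩ := hs x (s.mem_cons_self x)
    obtain ⟨t, rfl⟩ := ih fun z hz => hs z (Multiset.mem_cons_of_mem hz)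
    exact ⟨y ::ₘ t, Multiset.map_cons f y t⟩

theorem Set.ncard_add_ncard_le_of_inter_subset {α : Type*} [Finite α] {W U₁ U₂ W₂ : Set α}
    (hW : W ⊆ U₁) (hWU₂ : Disjoint W U₂) (hU₁U₂ : U₁ ∩ U₂ ⊆ W₂) :
    U₁.ncard + W.ncard + 2 * U₂.ncard ≤ 2 * (U₁ ∪ U₂).ncard + W₂.ncard := by
  have hunion := Set.ncard_union_add_ncard_inter U₁ U₂
  have hinter := Set.ncard_le_ncard hU₁U₂
  have hdisj : Disjoint W (U₁ ∩ U₂) := hWU₂.mono_right Set.inter_subset_right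
  have hsplit := Set.ncard_union_eq hdisj
  have hsub := Set.ncard_le_ncard
    (Set.union_subset hW (Set.inter_subset_left (s := U₁) (t := U₂)))
  omega

section

variable {n d : ℕ} {a b : ℤ} {L : ℤ → Set (Multiset (Fin n))}

def layerVertices (L : ℤ → Set (Multiset (Fin n))) (i : ℤ) : Set (Fin n) :=
  {u | ∃ X ∈ L i, u ∈ X}

def vertices (L : ℤ → Set (Multiset (Fin n))) : Set (Fin n) :=
  {u | ∃ i, u ∈ layerVertices L i}

def restrictLayers (L : ℤ → Set (Multiset (Fin n))) (a b i : ℤ) : Set (Multiset (Fin n)) :=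
  if i ∈ Set.Icc a b then L i else ∅

def link (L : ℤ → Set (Multiset (Fin n))) (v : Fin n) (i : ℤ) : Set (Multiset (Fin n)) :=
  {S | v ::ₘ S ∈ L i}

theorem mem_restrictLayers {a b i : ℤ} {X : Multiset (Fin n)} :
    X ∈ restrictLayers L a b i ↔ i ∈ Set.Icc a b ∧ X ∈ L i := by
  unfold restrictLayers
  split_ifs with h <;> simp [h]

theorem layerVertices_restrictLayers {a b i : ℤ} (hi : i ∈ Set.Icc a b) :
    layerVertices (restrictLayers L a b) i = layerVertices L i := by
  simp only [layerVertices, mem_restrictLayers, hi, true_and]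

theorem mem_vertices_restrictLayers {a b : ℤ} {u : Fin n} :
    u ∈ vertices (restrictLayers L a b) ↔ ∃ i ∈ Set.Icc a b, u ∈ layerVertices L i :=
  ⟨fun ⟨i, X, hX, hu⟩ =>
      ⟨i, (mem_restrictLayers.1 hX).1, X, (mem_restrictLayers.1 hX).2, hu⟩,
    fun ⟨i, hi, hu⟩ => ⟨i, by rwa [layerVertices_restrictLayers hi]⟩⟩

theorem vertices_restrictLayers_subset (a b : ℤ) :
    vertices (restrictLayers L a b) ⊆ vertices L :=
  fun _ ⟨i, X, hX, hu⟩ => ⟨i, X, (mem_restrictLayers.1 hX).2, hu⟩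

namespace IsCLM

theorem length_le_card_sym (h : IsCLM n d a b L) :
    (b - a).toNat ≤ Fintype.card (Sym (Fin n) d) := by
  obtain ⟨-, hcard, hne, hdisj, -⟩ := h
  have hfacet : ∀ i : Finset.Ioc a b, ∃ X : Sym (Fin n) d, (X : Multiset (Fin n)) ∈ L i := by
    rintro ⟨i, hi⟩
    obtain ⟨X, hX⟩ := (hne i).2 (by rw [Finset.mem_Ioc] at hi; omega)
    exact ⟨⟨X, hcard i X hX⟩, hX⟩
  choose F hF using hfacet
  have hinj : Function.Injective F := fun i j hij =>
    Subtype.ext (hdisj i j _ (hF i) (hij ▸ hF j))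
  simpa using Fintype.card_le_of_injective F hinj

theorem length_le_Hclm (h : IsCLM n d a b L) : (b - a).toNat ≤ Hclm n d :=
  le_csSup
    ⟨Fintype.card (Sym (Fin n) d), fun _ ⟨_, _, _, h', hl⟩ => hl ▸ h'.length_le_card_sym⟩
    ⟨a, b, L, h, rfl⟩

theorem mem_layerVertices_of_le (h : IsCLM n d a b L) {u : Fin n} {i j k : ℤ} (hij : i ≤ j)
    (hjk : j ≤ k) (hi : u ∈ layerVertices L i) (hk : u ∈ layerVertices L k) :
    u ∈ layerVertices L j := by
  obtain ⟨X, hX, huX⟩ := hi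
  obtain ⟨Y, hY, huY⟩ := hk
  obtain ⟨Z, hZ, huZ⟩ := h.2.2.2.2 {u} i j k hij hjk
    ⟨X, hX, Multiset.singleton_le.2 huX⟩ ⟨Y, hY, Multiset.singleton_le.2 huY⟩
  exact ⟨Z, hZ, Multiset.singleton_le.1 huZ⟩

theorem layerVertices_nonempty (h : IsCLM n d a b L) (hd : 1 ≤ d) {i : ℤ} (hai : a ≤ i)
    (hib : i ≤ b) : (layerVertices L i).Nonempty := by
  obtain ⟨X, hX⟩ := (h.2.2.1 i).2 ⟨hai, hib⟩
  obtain ⟨u, hu⟩ := Multiset.card_pos_iff_exists_mem.1 (by rw [h.2.1 i X hX]; omega)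
  exact ⟨u, X, hX, hu⟩

theorem restrict (h : IsCLM n d a b L) {a' b' : ℤ} (ha : a ≤ a') (hab' : a' ≤ b')
    (hb : b' ≤ b) : IsCLM n d a' b' (restrictLayers L a' b') := by
  obtain ⟨-, hcard, hne, hdisj, hconn⟩ := h
  refine ⟨hab', fun i X hX => hcard i X (mem_restrictLayers.1 hX).2, fun i => ?_,
    fun i j X hi hj => hdisj i j X (mem_restrictLayers.1 hi).2 (mem_restrictLayers.1 hj).2, ?_⟩
  · unfold restrictLayers
    split_ifs with hi
    · exact (hne i).trans ⟨fun _ => hi, fun _ => ⟨ha.trans hi.1, hi.2.trans hb⟩⟩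
    · simpa using hi
  · rintro S i j k hij hjk ⟨X, hX, hSX⟩ ⟨Y, hY, hSY⟩
    rw [mem_restrictLayers] at hX hY
    obtain ⟨Z, hZ, hSZ⟩ := hconn S i j k hij hjk ⟨X, hX.2, hSX⟩ ⟨Y, hY.2, hSY⟩
    exact ⟨Z, mem_restrictLayers.2 ⟨⟨hX.1.1.trans hij, hjk.trans hY.1.2⟩, hZ⟩, hSZ⟩

theorem link (h : IsCLM n d a b L) {v : Fin n} (ha : v ∈ layerVertices L a)
    (hb : v ∈ layerVertices L b) : IsCLM n (d - 1) a b (_root_.link L v) := by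
  obtain ⟨hab, hcard, hne, hdisj, hconn⟩ := h
  refine ⟨hab, fun i S hS => ?_,
    fun i => ⟨fun ⟨S, hS⟩ => (hne i).1 ⟨_, hS⟩, fun hi => ?_⟩,
    fun i j S hi hj => hdisj i j _ hi hj, ?_⟩
  · have := hcard i _ hS
    rw [Multiset.card_cons] at this
    omega
  · obtain ⟨X, hX, hvX⟩ :=
      mem_layerVertices_of_le ⟨hab, hcard, hne, hdisj, hconn⟩ hi.1 hi.2 ha hb
    exact ⟨X.erase v, show v ::ₘ X.erase v ∈ L i by rwa [Multiset.cons_erase hvX]⟩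
  · rintro S i j k hij hjk ⟨X, hX, hSX⟩ ⟨Y, hY, hSY⟩
    obtain ⟨Z, hZ, hSZ⟩ := hconn (v ::ₘ S) i j k hij hjk
      ⟨_, hX, Multiset.cons_le_cons v hSX⟩ ⟨_, hY, Multiset.cons_le_cons v hSY⟩
    have hvZ : v ::ₘ Z.erase v = Z :=
      Multiset.cons_erase (Multiset.mem_of_le hSZ (S.mem_cons_self v))
    refine ⟨Z.erase v, show v ::ₘ Z.erase v ∈ L j by rwa [hvZ], ?_⟩
    rwa [← Multiset.cons_le_cons_iff v, hvZ]

theorem comap {m : ℕ} (h : IsCLM n d a b L) {g : Fin m → Fin n} (hg : Function.Injective g)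
    (hL : vertices L ⊆ Set.range g) : IsCLM m d a b (fun i => Multiset.map g ⁻¹' L i) := by
  obtain ⟨hab, hcard, hne, hdisj, hconn⟩ := h
  have hlift : ∀ i, ∀ X ∈ L i, ∃ Y : Multiset (Fin m), Y.map g = X := fun i X hX =>
    Multiset.exists_map_eq_of_forall_mem_range fun u hu => hL ⟨i, X, hX, hu⟩
  refine ⟨hab, fun i Y hY => by simpa using hcard i _ hY,
    fun i => ⟨fun ⟨Y, hY⟩ => (hne i).1 ⟨_, hY⟩, fun hi => ?_⟩,
    fun i j Y hi hj => hdisj i j _ hi hj, ?_⟩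
  · obtain ⟨X, hX⟩ := (hne i).2 hi
    obtain ⟨Y, rfl⟩ := hlift i X hX
    exact ⟨Y, hX⟩
  · rintro S i j k hij hjk ⟨X, hX, hSX⟩ ⟨Y, hY, hSY⟩
    obtain ⟨Z, hZ, hSZ⟩ := hconn (S.map g) i j k hij hjk
      ⟨_, hX, Multiset.map_le_map hSX⟩ ⟨_, hY, Multiset.map_le_map hSY⟩
    obtain ⟨Z, rfl⟩ := hlift j Z hZ
    exact ⟨Z, hZ, (Multiset.map_le_map_iff hg).1 hSZ⟩

theorem length_le_Hclm_of_vertices_subset (h : IsCLM n d a b L) (s : Finset (Fin n))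
    (hs : vertices L ⊆ s) : (b - a).toNat ≤ Hclm s.card d := by
  have hg : Function.Injective fun x => (s.equivFin.symm x : Fin n) :=
    Subtype.val_injective.comp s.equivFin.symm.injective
  refine (h.comap hg fun u hu => ?_).length_le_Hclm
  exact ⟨s.equivFin ⟨u, hs hu⟩, by simp⟩

theorem length_le_Hclm_link (h : IsCLM n d a b L) {v : Fin n} (ha : v ∈ layerVertices L a)
    (hb : v ∈ layerVertices L b) : (b - a).toNat ≤ Hclm (vertices L).ncard (d - 1) := by
  rw [Set.ncard_eq_toFinset_card _ (Set.toFinite _)]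
  refine (h.link ha hb).length_le_Hclm_of_vertices_subset _ ?_
  rintro u ⟨i, S, hS, hu⟩
  simpa using ⟨i, _, hS, Multiset.mem_cons_of_mem hu⟩

theorem exists_last_layer_meeting_first (h : IsCLM n d a b L) (hd : 1 ≤ d) :
    ∃ b₁ v, a ≤ b₁ ∧ b₁ ≤ b ∧
      v ∈ layerVertices L a ∧ v ∈ layerVertices L b₁ ∧
      ∀ i, b₁ < i → Disjoint (layerVertices L a) (layerVertices L i) := by
  obtain ⟨u, hu⟩ := h.layerVertices_nonempty hd le_rfl h.1
  obtain ⟨b₁, ⟨hb₁, v, hva, hvb₁⟩, hmax⟩ := Int.exists_greatest_of_bdd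
    (P := fun i => i ≤ b ∧ ∃ v, v ∈ layerVertices L a ∧ v ∈ layerVertices L i)
    ⟨b, fun _ hi => hi.1⟩ ⟨a, h.1, u, hu, hu⟩
  refine ⟨b₁, v, hmax a ⟨h.1, u, hu, hu⟩, hb₁, hva, hvb₁, fun i hi => ?_⟩
  rw [Set.disjoint_left]
  intro u hua hui
  have hib : i ≤ b := by
    by_contra! hbi
    obtain ⟨X, hX, -⟩ := hui
    exact absurd ((h.2.2.1 i).1 ⟨X, hX⟩).2 hbi.not_ge
  exact hi.not_ge (hmax i ⟨hib, u, hua, hui⟩)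

theorem inter_vertices_restrictLayers_subset (h : IsCLM n d a b L) {a' c b' : ℤ} :
    vertices (restrictLayers L a' c) ∩ vertices (restrictLayers L (c + 1) b') ⊆
      layerVertices L (c + 1) := by
  rintro u ⟨hu₁, hu₂⟩
  obtain ⟨i, hi, hui⟩ := mem_vertices_restrictLayers.1 hu₁
  obtain ⟨j, hj, huj⟩ := mem_vertices_restrictLayers.1 hu₂
  exact h.mem_layerVertices_of_le (by linarith [hi.2]) hj.1 hui huj

theorem exists_decomposition {a b : ℤ} {L : ℤ → Set (Multiset (Fin n))} (h : IsCLM n d a b L)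
    (hd : 1 ≤ d) :
    ∃ (k : ℕ) (ns : Fin k → ℕ), 1 ≤ k ∧ (∀ i, 1 ≤ ns i) ∧
      ∑ i, ns i + (layerVertices L a).ncard ≤ 2 * (vertices L).ncard ∧
      (b - a).toNat ≤ ∑ i, Hclm (ns i) (d - 1) + (k - 1) := by
  obtain ⟨b₁, v, hab₁, hb₁b, hva, hvb₁, hlast⟩ := h.exists_last_layer_meeting_first hd
  have ha : a ∈ Set.Icc a b₁ := ⟨le_rfl, hab₁⟩
  have hb₁ : b₁ ∈ Set.Icc a b₁ := ⟨hab₁, le_rfl⟩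
  set U₁ := vertices (restrictLayers L a b₁)
  have hpiece : (b₁ - a).toNat ≤ Hclm U₁.ncard (d - 1) :=
    (h.restrict le_rfl hab₁ hb₁b).length_le_Hclm_link
      (by rwa [layerVertices_restrictLayers ha]) (by rwa [layerVertices_restrictLayers hb₁])
  have hWU₁ : layerVertices L a ⊆ U₁ := fun _ hu =>
    mem_vertices_restrictLayers.2 ⟨a, ha, hu⟩
  have hU₁ : 0 < U₁.ncard := (Set.ncard_pos).2 ⟨v, hWU₁ hva⟩
  rcases hb₁b.eq_or_lt with rfl | hb₁lt
  · refine ⟨1, fun _ => U₁.ncard, le_rfl, fun _ => hU₁, ?_, by simpa using hpiece⟩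
    have hU₁U : U₁.ncard ≤ (vertices L).ncard :=
      Set.ncard_le_ncard (vertices_restrictLayers_subset a b₁)
    have hW := Set.ncard_le_ncard hWU₁
    simp only [Finset.univ_unique, Finset.sum_singleton]
    omega
  obtain ⟨k, ns, hk, hns, hcount, hlen⟩ :=
    (h.restrict (by omega) hb₁lt le_rfl).exists_decomposition hd
  set U₂ := vertices (restrictLayers L (b₁ + 1) b)
  have hcut : Disjoint (layerVertices L a) U₂ := by
    refine Set.disjoint_left.2 fun u hu hu₂ => ?_
    obtain ⟨i, hi, hui⟩ := mem_vertices_restrictLayers.1 hu₂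
    exact Set.disjoint_left.1 (hlast i (by linarith [hi.1])) hu hui
  have hmeet : U₁ ∩ U₂ ⊆ layerVertices (restrictLayers L (b₁ + 1) b) (b₁ + 1) := by
    rw [layerVertices_restrictLayers ⟨le_rfl, hb₁lt⟩]
    exact h.inter_vertices_restrictLayers_subset
  have hcount₁ := Set.ncard_add_ncard_le_of_inter_subset hWU₁ hcut hmeet
  have hunion : (U₁ ∪ U₂).ncard ≤ (vertices L).ncard := Set.ncard_le_ncard
    (Set.union_subset (vertices_restrictLayers_subset _ _) (vertices_restrictLayers_subset _ _))
  refine ⟨k + 1, Fin.cons U₁.ncard ns, by omega, Fin.cases hU₁ hns, ?_, ?_⟩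
  · rw [Fin.sum_cons]
    omega
  · simp only [Fin.sum_univ_succ, Fin.cons_zero, Fin.cons_succ]
    omega
termination_by (b - a).toNat
decreasing_by omega

end IsCLM

end

/-- Decomposition lemma: for every connected layer multicomplex `M` of rank `d` on `n`
elements there are positive integers `n₁,…,n_k` with `n₁ + ⋯ + n_k ≤ 2n − 1` such that
the length of `M` is at most `H_clm(n₁,d−1) + ⋯ + H_clm(n_k,d−1) + k − 1`. -/
theorem clm_decomposition (n d : ℕ) (hd : 1 ≤ d) (a b : ℤ)
    (L : ℤ → Set (Multiset (Fin n))) (hM : IsCLM n d a b L) :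
    ∃ (k : ℕ) (_ : 1 ≤ k) (ns : Fin k → ℕ),
      (∀ i, 1 ≤ ns i) ∧
      (∑ i, ns i) ≤ 2 * n - 1 ∧
      (b - a).toNat ≤ (∑ i, Hclm (ns i) (d - 1)) + (k - 1) := by
  obtain ⟨k, ns, hk, hns, hcount, hlen⟩ := hM.exists_decomposition hd
  have hW : 0 < (layerVertices L a).ncard :=
    (hM.layerVertices_nonempty hd le_rfl hM.1).ncard_pos
  have hU : (vertices L).ncard ≤ n := by simpa using Set.ncard_le_card (vertices L)
  exact ⟨k, hk, ns, hns, by omega, hlen⟩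
end
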